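/- arXiv:2410.09938 — 2 statements merged into one kernel-verified Lean document; each statement's English description precedes it below -/
import Mathlib

section
/- Let A be a real m × n matrix with m > n, let E be a real m × n matrix, and set Ã = A + E. If σ_n(A) > ‖E‖_F, then ρ(Ã) ≥ (σ_n(A) − ‖E‖_F) / (σ_1(A) + ‖E‖_F). -/
open Finset

/-- Frobenius norm of a real matrix: `‖A‖_F = (Σ_{i,j} A_{ij}²)^{1/2}`. -/
noncomputable def frobNorm {m n : ℕ} (A : Matrix (Fin m) (Fin n) ℝ) : ℝ :=
  Real.sqrt (∑ i, ∑ j, (A i j) ^ 2)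

/-- The `k`-th singular value (`k : Fin n`, 0-indexed, in decreasing order):
the square root of the `k`-th largest eigenvalue of `Aᵀ * A`. -/
noncomputable def singularValue {m n : ℕ} (A : Matrix (Fin m) (Fin n) ℝ) (k : Fin n) : ℝ :=
  Real.sqrt ((Matrix.isHermitian_conjTranspose_mul_self A).eigenvalues
    (Tuple.sort (Matrix.isHermitian_conjTranspose_mul_self A).eigenvalues (Fin.rev k)))

/-- Reciprocal condition number `ρ(A) = σ_n(A) / σ_1(A)`. -/
noncomputable def rho {m n : ℕ} (hn : 0 < n) (A : Matrix (Fin m) (Fin n) ℝ) : ℝ :=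
  singularValue A ⟨n - 1, by omega⟩ / singularValue A ⟨0, hn⟩


open Matrix in
lemma rayleigh_le {n : ℕ} (M : Matrix (Fin n) (Fin n) ℝ) (hM : M.IsHermitian) {c : ℝ}
    (hc : ∀ i, hM.eigenvalues i ≤ c) (x : Fin n → ℝ) :
    x ⬝ᵥ (M *ᵥ x) ≤ c * (x ⬝ᵥ x) := by
  set U : Matrix (Fin n) (Fin n) ℝ := (hM.eigenvectorUnitary : Matrix (Fin n) (Fin n) ℝ) with hUdef
  set μ : Fin n → ℝ := hM.eigenvalues with hμdef
  have hUU : U * star U = 1 := (Matrix.mem_unitaryGroup_iff).mp hM.eigenvectorUnitary.2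
  have hspec : M = U * diagonal (RCLike.ofReal ∘ μ) * star U := hM.spectral_theorem
  have h1 : c • (1 : Matrix (Fin n) (Fin n) ℝ) - M
      = U * diagonal (fun i => c - μ i) * star U := by
    have h2 : c • (1 : Matrix (Fin n) (Fin n) ℝ) = U * diagonal (fun _ => c) * star U := by
      calc c • (1 : Matrix (Fin n) (Fin n) ℝ) = c • (U * star U) := by rw [hUU]
        _ = U * (c • (1:Matrix (Fin n) (Fin n) ℝ)) * star U := by
            simp [Matrix.mul_smul, Matrix.smul_mul]
        _ = U * diagonal (fun _ => c) * star U := by rw [smul_one_eq_diagonal]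
    rw [h2]
    conv_lhs => rw [hspec]
    rw [← Matrix.sub_mul, ← Matrix.mul_sub, diagonal_sub]
    norm_num
  have hP : (c • (1 : Matrix (Fin n) (Fin n) ℝ) - M).PosSemidef := by
    rw [h1, show star U = Uᴴ from rfl]
    exact Matrix.PosSemidef.mul_mul_conjTranspose_same
      (Matrix.posSemidef_diagonal_iff.mpr fun i => by linarith [hc i]) U
  have := hP.dotProduct_mulVec_nonneg x
  simp only [Matrix.sub_mulVec, Matrix.smul_mulVec, Matrix.one_mulVec, star_trivial,
    dotProduct_sub, dotProduct_smul, smul_eq_mul] at this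
  linarith

open Matrix in
lemma rayleigh_ge {n : ℕ} (M : Matrix (Fin n) (Fin n) ℝ) (hM : M.IsHermitian) {c : ℝ}
    (hc : ∀ i, c ≤ hM.eigenvalues i) (x : Fin n → ℝ) :
    c * (x ⬝ᵥ x) ≤ x ⬝ᵥ (M *ᵥ x) := by
  set U : Matrix (Fin n) (Fin n) ℝ := (hM.eigenvectorUnitary : Matrix (Fin n) (Fin n) ℝ) with hUdef
  set μ : Fin n → ℝ := hM.eigenvalues with hμdef
  have hUU : U * star U = 1 := (Matrix.mem_unitaryGroup_iff).mp hM.eigenvectorUnitary.2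
  have hspec : M = U * diagonal (RCLike.ofReal ∘ μ) * star U := hM.spectral_theorem
  have h1 : M - c • (1 : Matrix (Fin n) (Fin n) ℝ)
      = U * diagonal (fun i => μ i - c) * star U := by
    have h2 : c • (1 : Matrix (Fin n) (Fin n) ℝ) = U * diagonal (fun _ => c) * star U := by
      calc c • (1 : Matrix (Fin n) (Fin n) ℝ) = c • (U * star U) := by rw [hUU]
        _ = U * (c • (1:Matrix (Fin n) (Fin n) ℝ)) * star U := by
            simp [Matrix.mul_smul, Matrix.smul_mul]
        _ = U * diagonal (fun _ => c) * star U := by rw [smul_one_eq_diagonal]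
    rw [h2]
    conv_lhs => rw [hspec]
    rw [← Matrix.sub_mul, ← Matrix.mul_sub, diagonal_sub]
    norm_num
  have hP : (M - c • (1 : Matrix (Fin n) (Fin n) ℝ)).PosSemidef := by
    rw [h1, show star U = Uᴴ from rfl]
    exact Matrix.PosSemidef.mul_mul_conjTranspose_same
      (Matrix.posSemidef_diagonal_iff.mpr fun i => by linarith [hc i]) U
  have := hP.dotProduct_mulVec_nonneg x
  simp only [Matrix.sub_mulVec, Matrix.smul_mulVec, Matrix.one_mulVec, star_trivial,
    dotProduct_sub, dotProduct_smul, smul_eq_mul] at this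
  linarith

open Matrix in
lemma exists_attain {n : ℕ} (M : Matrix (Fin n) (Fin n) ℝ) (hM : M.IsHermitian) (k : Fin n) :
    ∃ x : Fin n → ℝ, x ⬝ᵥ x = 1 ∧ x ⬝ᵥ (M *ᵥ x) = hM.eigenvalues k := by
  have h : ‖hM.eigenvectorBasis k‖ = 1 := hM.eigenvectorBasis.orthonormal.1 k
  rw [EuclideanSpace.norm_eq] at h
  have h1 : (⇑(hM.eigenvectorBasis k) : Fin n → ℝ) ⬝ᵥ ⇑(hM.eigenvectorBasis k) = 1 := by
    have := Real.sqrt_eq_one.mp h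
    simpa [dotProduct, Real.norm_eq_abs, sq_abs, pow_two] using this
  refine ⟨⇑(hM.eigenvectorBasis k), h1, ?_⟩
  rw [hM.mulVec_eigenvectorBasis k, dotProduct_smul, h1, smul_eq_mul, mul_one]

open Matrix in
lemma dot_mulVec_self {m n : ℕ} (B : Matrix (Fin m) (Fin n) ℝ) (x : Fin n → ℝ) :
    x ⬝ᵥ ((Bᴴ * B) *ᵥ x) = (B *ᵥ x) ⬝ᵥ (B *ᵥ x) := by
  rw [Matrix.conjTranspose_eq_transpose_of_trivial,
    ← Matrix.mulVec_mulVec, Matrix.dotProduct_mulVec, Matrix.vecMul_transpose]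

lemma sort_min {n : ℕ} (f : Fin n → ℝ) (hn : 0 < n) (j : Fin n) :
    f (Tuple.sort f ⟨0, hn⟩) ≤ f j := by
  have h := Tuple.monotone_sort f (a := ⟨0, hn⟩) (b := (Tuple.sort f).symm j) (by simp [Fin.le_def])
  simpa using h

lemma sort_max {n : ℕ} (f : Fin n → ℝ) (hn : 0 < n) (j : Fin n) :
    f j ≤ f (Tuple.sort f ⟨n - 1, by omega⟩) := by
  have h := Tuple.monotone_sort f (a := (Tuple.sort f).symm j) (b := ⟨n - 1, by omega⟩)
    (by simp [Fin.le_def]; omega)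
  simpa using h

open Matrix in
lemma frob_bound {m n : ℕ} (E : Matrix (Fin m) (Fin n) ℝ) (x : Fin n → ℝ) :
    (E *ᵥ x) ⬝ᵥ (E *ᵥ x) ≤ (∑ i, ∑ j, (E i j) ^ 2) * (x ⬝ᵥ x) := by
  have key : ∀ i, (E *ᵥ x) i * (E *ᵥ x) i ≤ (∑ j, (E i j)^2) * (x ⬝ᵥ x) := by
    intro i
    have h := Finset.sum_mul_sq_le_sq_mul_sq Finset.univ (fun j => E i j) x
    simpa [Matrix.mulVec, dotProduct, pow_two] using h
  calc (E *ᵥ x) ⬝ᵥ (E *ᵥ x) = ∑ i, (E *ᵥ x) i * (E *ᵥ x) i := rfl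
    _ ≤ ∑ i, (∑ j, (E i j)^2) * (x ⬝ᵥ x) := Finset.sum_le_sum fun i _ => key i
    _ = (∑ i, ∑ j, (E i j) ^ 2) * (x ⬝ᵥ x) := by rw [Finset.sum_mul]

open Matrix in
noncomputable def nrm {k : ℕ} (y : Fin k → ℝ) : ℝ := Real.sqrt (y ⬝ᵥ y)

open Matrix in
lemma nrm_eq {k : ℕ} (y : Fin k → ℝ) : nrm y = ‖(WithLp.equiv 2 (Fin k → ℝ)).symm y‖ := by
  rw [EuclideanSpace.norm_eq, nrm]
  congr 1
  simp [dotProduct, Real.norm_eq_abs, sq_abs, pow_two]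

lemma nrm_add_le {k : ℕ} (y z : Fin k → ℝ) : nrm (y + z) ≤ nrm y + nrm z := by
  simp only [nrm_eq]
  rw [show (WithLp.equiv 2 (Fin k → ℝ)).symm (y + z)
    = (WithLp.equiv 2 (Fin k → ℝ)).symm y + (WithLp.equiv 2 (Fin k → ℝ)).symm z from rfl]
  exact norm_add_le _ _

lemma nrm_nonneg {k : ℕ} (y : Fin k → ℝ) : 0 ≤ nrm y := Real.sqrt_nonneg _

open Matrix in
lemma nrm_sub_le {k : ℕ} (y z : Fin k → ℝ) : nrm y - nrm z ≤ nrm (y + z) := by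
  have h := nrm_add_le (y + z) (-z)
  simp only [add_neg_cancel_right] at h
  have hz : nrm (-z) = nrm z := by simp [nrm]
  linarith [h, hz.le]


/-- eigenvalues of `Bᵀ * B`. -/
noncomputable def ev {m n : ℕ} (B : Matrix (Fin m) (Fin n) ℝ) : Fin n → ℝ :=
  (Matrix.isHermitian_conjTranspose_mul_self B).eigenvalues

lemma sv_eq {m n : ℕ} (B : Matrix (Fin m) (Fin n) ℝ) (k : Fin n) :
    singularValue B k = Real.sqrt (ev B (Tuple.sort (ev B) (Fin.rev k))) := rfl

open Matrix

/-- If `σ_n(A) > ‖E‖_F` (with `m > n`), then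
`ρ(A + E) ≥ (σ_n(A) − ‖E‖_F) / (σ_1(A) + ‖E‖_F)`. -/
theorem rho_lower_bound_of_nonsingular (m n : ℕ) (hmn : n < m) (hn : 0 < n)
    (A E : Matrix (Fin m) (Fin n) ℝ)
    (hlt : frobNorm E < singularValue A ⟨n - 1, by omega⟩) :
    rho hn (A + E) ≥
      (singularValue A ⟨n - 1, by omega⟩ - frobNorm E) /
        (singularValue A ⟨0, hn⟩ + frobNorm E) := by
  have hrevlast : ∀ h, (Fin.rev (⟨n - 1, h⟩ : Fin n)) = ⟨0, hn⟩ := by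
    intro h; apply Fin.ext; simp [Fin.rev]; omega
  have hrev0 : ∀ h, (Fin.rev (⟨0, hn⟩ : Fin n)) = (⟨n - 1, h⟩ : Fin n) := by
    intro h; apply Fin.ext; simp [Fin.rev]
  have hfE0 : (0:ℝ) ≤ frobNorm E := Real.sqrt_nonneg _
  -- nrm (E *ᵥ x) ≤ frobNorm E for unit x
  have hEx : ∀ x : Fin n → ℝ, x ⬝ᵥ x = 1 → nrm (E *ᵥ x) ≤ frobNorm E := by
    intro x hx
    have h := frob_bound E x
    rw [hx, mul_one] at h
    exact Real.sqrt_le_sqrt h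
  have hAmin : ∀ j, ev A (Tuple.sort (ev A) ⟨0, hn⟩) ≤ ev A j := sort_min (ev A) hn
  have hAmax : ∀ j, ev A j ≤ ev A (Tuple.sort (ev A) ⟨n - 1, by omega⟩) := sort_max (ev A) hn
  have hσminA : singularValue A ⟨n - 1, by omega⟩
      = Real.sqrt (ev A (Tuple.sort (ev A) ⟨0, hn⟩)) := by
    rw [sv_eq, hrevlast]
  have hσmaxA : singularValue A ⟨0, hn⟩
      = Real.sqrt (ev A (Tuple.sort (ev A) ⟨n - 1, by omega⟩)) := by
    rw [sv_eq, hrev0 (by omega)]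
  have hσminT : singularValue (A + E) ⟨n - 1, by omega⟩
      = Real.sqrt (ev (A + E) (Tuple.sort (ev (A + E)) ⟨0, hn⟩)) := by
    rw [sv_eq, hrevlast]
  have hσmaxT : singularValue (A + E) ⟨0, hn⟩
      = Real.sqrt (ev (A + E) (Tuple.sort (ev (A + E)) ⟨n - 1, by omega⟩)) := by
    rw [sv_eq, hrev0 (by omega)]
  -- lower bound on σmin(A+E)
  obtain ⟨v, hv1, hv2⟩ := exists_attain _ (Matrix.isHermitian_conjTranspose_mul_self (A + E))
    (Tuple.sort (ev (A + E)) ⟨0, hn⟩)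
  have hminT : singularValue (A + E) ⟨n - 1, by omega⟩ = nrm ((A + E) *ᵥ v) := by
    rw [hσminT, nrm, ← dot_mulVec_self, hv2]; rfl
  have hAv : singularValue A ⟨n - 1, by omega⟩ ≤ nrm (A *ᵥ v) := by
    rw [hσminA, nrm]
    apply Real.sqrt_le_sqrt
    have h := rayleigh_ge _ (Matrix.isHermitian_conjTranspose_mul_self A)
      (c := ev A (Tuple.sort (ev A) ⟨0, hn⟩)) hAmin v
    rw [hv1, mul_one, dot_mulVec_self] at h
    exact h
  have hlow : singularValue A ⟨n - 1, by omega⟩ - frobNorm E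
      ≤ singularValue (A + E) ⟨n - 1, by omega⟩ := by
    rw [hminT, Matrix.add_mulVec]
    have h1 := nrm_sub_le (A *ᵥ v) (E *ᵥ v)
    have h2 := hEx v hv1
    linarith
  -- upper bound on σmax(A+E)
  obtain ⟨u, hu1, hu2⟩ := exists_attain _ (Matrix.isHermitian_conjTranspose_mul_self (A + E))
    (Tuple.sort (ev (A + E)) ⟨n - 1, by omega⟩)
  have hmaxT : singularValue (A + E) ⟨0, hn⟩ = nrm ((A + E) *ᵥ u) := by
    rw [hσmaxT, nrm, ← dot_mulVec_self, hu2]; rfl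
  have hAu : nrm (A *ᵥ u) ≤ singularValue A ⟨0, hn⟩ := by
    rw [hσmaxA, nrm]
    apply Real.sqrt_le_sqrt
    have h := rayleigh_le _ (Matrix.isHermitian_conjTranspose_mul_self A)
      (c := ev A (Tuple.sort (ev A) ⟨n - 1, by omega⟩)) hAmax u
    rw [hu1, mul_one, dot_mulVec_self] at h
    exact h
  have hhigh : singularValue (A + E) ⟨0, hn⟩ ≤ singularValue A ⟨0, hn⟩ + frobNorm E := by
    rw [hmaxT, Matrix.add_mulVec]
    have h1 := nrm_add_le (A *ᵥ u) (E *ᵥ u)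
    have h2 := hEx u hu1
    linarith
  have hminmax : singularValue (A + E) ⟨n - 1, by omega⟩ ≤ singularValue (A + E) ⟨0, hn⟩ := by
    rw [hσminT, hσmaxT]
    exact Real.sqrt_le_sqrt (sort_max (ev (A + E)) hn _)
  have hpos : 0 < singularValue (A + E) ⟨0, hn⟩ := by linarith
  rw [rho, ge_iff_le]
  exact div_le_div₀ (Real.sqrt_nonneg _) hlow hpos hhigh
end

section
/- Let u_1, ..., u_n : D → ℝ be functions on a set D that are linearly dependent over ℝ (i.e., there exist coefficients c_1, ..., c_n ∈ ℝ, not all zero, with Σ_i c_i · u_i = 0 on D). Let p_1, ..., p_m ∈ D be any sample points with m > n, and let G ∈ ℝ^{m × n} be the sample matrix with entries G_{ji} = u_i(p_j). Let G̃ ∈ ℝ^{m × n} satisfy ‖G − G̃‖_F ≤ ε_G, and suppose C_1^{low} ≤ σ_1(G) with C_1^{low} > ε_G. Then ρ(G̃) ≤ ε_G / (C_1^{low} − ε_G). -/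
open Finset

section NRFRanCoAux
open Finset Matrix

lemma inner_eq_dot {n : ℕ} (a b : EuclideanSpace ℝ (Fin n)) :
    (inner ℝ a b : ℝ) = (a : Fin n → ℝ) ⬝ᵥ (b : Fin n → ℝ) := by
  simp [PiLp.inner_apply, RCLike.inner_apply, dotProduct, mul_comm]

lemma rayleigh_eq {n : ℕ} {M : Matrix (Fin n) (Fin n) ℝ} (hM : M.IsHermitian)
    (x : Fin n → ℝ) :
    x ⬝ᵥ M *ᵥ x = ∑ i, hM.eigenvalues i *
      (inner (𝕜 := ℝ) (hM.eigenvectorBasis i) ((WithLp.equiv 2 (Fin n → ℝ)).symm x)) ^ 2 := by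
  set b := hM.eigenvectorBasis with hb
  set y := (WithLp.equiv 2 (Fin n → ℝ)).symm x with hy
  have hyx : (y : Fin n → ℝ) = x := rfl
  set z := (WithLp.equiv 2 (Fin n → ℝ)).symm (M *ᵥ x) with hz
  have hzx : (z : Fin n → ℝ) = M *ᵥ x := rfl
  have key : ∀ i, (inner ℝ (b i) z : ℝ) = hM.eigenvalues i * inner ℝ (b i) y := by
    intro i
    rw [inner_eq_dot, inner_eq_dot, hzx, hyx, dotProduct_mulVec]
    have hMt : Mᵀ = M := by
      conv_rhs => rw [← hM]
      rw [Matrix.conjTranspose_eq_transpose_of_trivial]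
    have h1 : (b i : Fin n → ℝ) ᵥ* M = M *ᵥ (b i : Fin n → ℝ) := by
      nth_rewrite 1 [← hMt]
      exact Matrix.vecMul_transpose ..
    have h2 : M *ᵥ (b i : Fin n → ℝ) = hM.eigenvalues i • (b i : Fin n → ℝ) :=
      hM.mulVec_eigenvectorBasis i
    rw [h1, h2, smul_dotProduct, smul_eq_mul]
  calc x ⬝ᵥ M *ᵥ x = (inner ℝ y z : ℝ) := (inner_eq_dot y z).symm
    _ = ∑ i, (inner ℝ y (b i) : ℝ) * inner ℝ (b i) z := (b.sum_inner_mul_inner y z).symm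
    _ = ∑ i, hM.eigenvalues i * (inner (𝕜 := ℝ) (b i) y) ^ 2 := by
        refine Finset.sum_congr rfl fun i _ => ?_
        rw [key i, real_inner_comm y (b i)]; ring

lemma dot_self_eq {n : ℕ} {M : Matrix (Fin n) (Fin n) ℝ} (hM : M.IsHermitian)
    (x : Fin n → ℝ) :
    x ⬝ᵥ x = ∑ i, (inner (𝕜 := ℝ) (hM.eigenvectorBasis i) ((WithLp.equiv 2 (Fin n → ℝ)).symm x)) ^ 2 := by
  set b := hM.eigenvectorBasis
  set y := (WithLp.equiv 2 (Fin n → ℝ)).symm x with hy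
  have : x ⬝ᵥ x = (inner ℝ y y : ℝ) := (inner_eq_dot y y).symm
  rw [this, ← b.sum_inner_mul_inner y y]
  refine Finset.sum_congr rfl fun i _ => ?_
  rw [real_inner_comm y (b i)]; ring

lemma rayleigh_lower {n : ℕ} {M : Matrix (Fin n) (Fin n) ℝ} (hM : M.IsHermitian)
    (x : Fin n → ℝ) {lo : ℝ} (hlo : ∀ i, lo ≤ hM.eigenvalues i) :
    lo * (x ⬝ᵥ x) ≤ x ⬝ᵥ M *ᵥ x := by
  rw [rayleigh_eq hM, dot_self_eq hM, Finset.mul_sum]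
  exact Finset.sum_le_sum fun i _ => mul_le_mul_of_nonneg_right (hlo i) (sq_nonneg _)

lemma rayleigh_upper {n : ℕ} {M : Matrix (Fin n) (Fin n) ℝ} (hM : M.IsHermitian)
    (x : Fin n → ℝ) {hi : ℝ} (hhi : ∀ i, hM.eigenvalues i ≤ hi) :
    x ⬝ᵥ M *ᵥ x ≤ hi * (x ⬝ᵥ x) := by
  rw [rayleigh_eq hM, dot_self_eq hM, Finset.mul_sum]
  exact Finset.sum_le_sum fun i _ => mul_le_mul_of_nonneg_right (hhi i) (sq_nonneg _)

lemma sort_zero_le {n : ℕ} (hn : 0 < n) (f : Fin n → ℝ) (i : Fin n) :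
    f (Tuple.sort f ⟨0, hn⟩) ≤ f i := by
  obtain ⟨j, hj⟩ := (Tuple.sort f).surjective i
  rw [← hj]
  exact Tuple.monotone_sort f (by exact Fin.mk_le_mk.mpr (Nat.zero_le _))

lemma le_sort_last {n : ℕ} (hn : 0 < n) (f : Fin n → ℝ) (i : Fin n) :
    f i ≤ f (Tuple.sort f ⟨n - 1, by omega⟩) := by
  obtain ⟨j, hj⟩ := (Tuple.sort f).surjective i
  rw [← hj]
  refine Tuple.monotone_sort f ?_
  exact Fin.mk_le_mk.mpr (by omega)

lemma dot_transpose_mul {m n : ℕ} (A : Matrix (Fin m) (Fin n) ℝ) (w : Fin n → ℝ) :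
    w ⬝ᵥ (Aᵀ * A) *ᵥ w = (A *ᵥ w) ⬝ᵥ (A *ᵥ w) := by
  rw [← Matrix.mulVec_mulVec, Matrix.dotProduct_mulVec, Matrix.vecMul_transpose]

lemma mulVec_dot_le {m n : ℕ} (A : Matrix (Fin m) (Fin n) ℝ) (w : Fin n → ℝ) :
    (A *ᵥ w) ⬝ᵥ (A *ᵥ w) ≤ (∑ j, ∑ i, (A j i) ^ 2) * (w ⬝ᵥ w) := by
  have h1 : (A *ᵥ w) ⬝ᵥ (A *ᵥ w) = ∑ j, (∑ i, A j i * w i) ^ 2 := by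
    simp [dotProduct, Matrix.mulVec, sq]
  rw [h1, Finset.sum_mul]
  refine Finset.sum_le_sum fun j _ => ?_
  have := Finset.sum_mul_sq_le_sq_mul_sq Finset.univ (fun i => A j i) w
  calc (∑ i, A j i * w i) ^ 2 ≤ (∑ i, (A j i) ^ 2) * ∑ i, (w i) ^ 2 := this
    _ = (∑ i, (A j i) ^ 2) * (w ⬝ᵥ w) := by simp [dotProduct, sq]

lemma sqrt_dot_triangle {m : ℕ} (v w : Fin m → ℝ) :
    Real.sqrt (v ⬝ᵥ v) ≤ Real.sqrt (w ⬝ᵥ w) + Real.sqrt ((v - w) ⬝ᵥ (v - w)) := by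
  have hnorm : ∀ z : Fin m → ℝ, ‖(WithLp.equiv 2 (Fin m → ℝ)).symm z‖ = Real.sqrt (z ⬝ᵥ z) := by
    intro z
    rw [EuclideanSpace.norm_eq]
    congr 1
    simp [dotProduct, sq, Real.norm_eq_abs, abs_mul_abs_self]
  have key : (WithLp.equiv 2 (Fin m → ℝ)).symm v - (WithLp.equiv 2 (Fin m → ℝ)).symm w
      = (WithLp.equiv 2 (Fin m → ℝ)).symm (v - w) := rfl
  calc Real.sqrt (v ⬝ᵥ v) = ‖(WithLp.equiv 2 (Fin m → ℝ)).symm v‖ := (hnorm v).symm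
    _ ≤ ‖(WithLp.equiv 2 (Fin m → ℝ)).symm w‖ +
        ‖(WithLp.equiv 2 (Fin m → ℝ)).symm v - (WithLp.equiv 2 (Fin m → ℝ)).symm w‖ :=
      norm_le_norm_add_norm_sub' _ _
    _ = Real.sqrt (w ⬝ᵥ w) + Real.sqrt ((v - w) ⬝ᵥ (v - w)) := by rw [key, hnorm, hnorm]

theorem aux_main {D : Type*} (m n : ℕ)
    (hmn : n < m) (hn : 0 < n) (u : Fin n → D → ℝ)
    (hdep : ∃ c : Fin n → ℝ, (∃ i, c i ≠ 0) ∧ ∀ x : D, ∑ i, c i * u i x = 0)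
    (p : Fin m → D) (G Gt : Matrix (Fin m) (Fin n) ℝ)
    (hG : ∀ (j : Fin m) (i : Fin n), G j i = u i (p j))
    (εG C1low : ℝ)
    (hE : Real.sqrt (∑ i, ∑ j, ((G - Gt) i j) ^ 2) ≤ εG)
    (hC1 : C1low ≤ Real.sqrt ((Matrix.isHermitian_conjTranspose_mul_self G).eigenvalues
      (Tuple.sort (Matrix.isHermitian_conjTranspose_mul_self G).eigenvalues (Fin.rev ⟨0, hn⟩))))
    (hgap : εG < C1low) :
    Real.sqrt ((Matrix.isHermitian_conjTranspose_mul_self Gt).eigenvalues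
      (Tuple.sort (Matrix.isHermitian_conjTranspose_mul_self Gt).eigenvalues (Fin.rev ⟨n - 1, by omega⟩)))
    / Real.sqrt ((Matrix.isHermitian_conjTranspose_mul_self Gt).eigenvalues
      (Tuple.sort (Matrix.isHermitian_conjTranspose_mul_self Gt).eigenvalues (Fin.rev ⟨0, hn⟩)))
      ≤ εG / (C1low - εG) := by
  classical
  obtain ⟨c, ⟨i0, hi0⟩, hc⟩ := hdep
  have hε0 : 0 ≤ εG := le_trans (Real.sqrt_nonneg _) hE
  have hfs_nonneg : (0:ℝ) ≤ ∑ j, ∑ i, ((G - Gt) j i) ^ 2 :=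
    Finset.sum_nonneg fun j _ => Finset.sum_nonneg fun i _ => sq_nonneg _
  have hfrob_sq : ∑ j, ∑ i, ((G - Gt) j i) ^ 2 ≤ εG ^ 2 := by
    calc ∑ j, ∑ i, ((G - Gt) j i) ^ 2
        = (Real.sqrt (∑ j, ∑ i, ((G - Gt) j i) ^ 2)) ^ 2 := (Real.sq_sqrt hfs_nonneg).symm
      _ ≤ εG ^ 2 := pow_le_pow_left₀ (Real.sqrt_nonneg _) hE 2
  have hGc : G *ᵥ c = 0 := by
    funext j
    have h1 : (G *ᵥ c) j = ∑ i, c i * u i (p j) := by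
      simp [Matrix.mulVec, dotProduct, hG, mul_comm]
    simp [h1, hc (p j)]
  set hHG := Matrix.isHermitian_conjTranspose_mul_self G with hHGdef
  set hHt := Matrix.isHermitian_conjTranspose_mul_self Gt with hHtdef
  -- Part 1 : smallest singular value of Gt is ≤ εG
  have hcc : 0 < c ⬝ᵥ c := by
    have : (0:ℝ) < ∑ i, c i * c i :=
      Finset.sum_pos' (fun i _ => mul_self_nonneg _)
        ⟨i0, Finset.mem_univ _, mul_self_pos.mpr hi0⟩
    simpa [dotProduct] using this
  set lam0 := hHt.eigenvalues (Tuple.sort hHt.eigenvalues ⟨0, hn⟩) with hlam0def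
  have hray1 : lam0 * (c ⬝ᵥ c) ≤ c ⬝ᵥ (Gtᵀ * Gt) *ᵥ c := by
    rw [hlam0def]; exact rayleigh_lower hHt c (sort_zero_le hn _)
  have hMtc : c ⬝ᵥ (Gtᵀ * Gt) *ᵥ c = ((Gt - G) *ᵥ c) ⬝ᵥ ((Gt - G) *ᵥ c) := by
    rw [dot_transpose_mul]
    have : (Gt - G) *ᵥ c = Gt *ᵥ c := by
      rw [Matrix.sub_mulVec, hGc, sub_zero]
    rw [this]
  have hsum_eq : ∑ j, ∑ i, ((Gt - G) j i) ^ 2 = ∑ j, ∑ i, ((G - Gt) j i) ^ 2 := by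
    refine Finset.sum_congr rfl fun j _ => Finset.sum_congr rfl fun i _ => ?_
    simp [Matrix.sub_apply]; ring
  have hlam0_le : lam0 ≤ εG ^ 2 := by
    have h2 : ((Gt - G) *ᵥ c) ⬝ᵥ ((Gt - G) *ᵥ c)
        ≤ (∑ j, ∑ i, ((Gt - G) j i) ^ 2) * (c ⬝ᵥ c) := mulVec_dot_le _ _
    have h3 : lam0 * (c ⬝ᵥ c) ≤ εG ^ 2 * (c ⬝ᵥ c) := by
      calc lam0 * (c ⬝ᵥ c) ≤ ((Gt - G) *ᵥ c) ⬝ᵥ ((Gt - G) *ᵥ c) := hMtc ▸ hray1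
        _ ≤ (∑ j, ∑ i, ((Gt - G) j i) ^ 2) * (c ⬝ᵥ c) := h2
        _ ≤ εG ^ 2 * (c ⬝ᵥ c) := by
            apply mul_le_mul_of_nonneg_right _ hcc.le
            rw [hsum_eq]; exact hfrob_sq
    exact le_of_mul_le_mul_right h3 hcc
  have hrev1 : Fin.rev (⟨n - 1, by omega⟩ : Fin n) = ⟨0, hn⟩ := by
    ext; simp [Fin.rev]; omega
  have hσn : Real.sqrt (hHt.eigenvalues (Tuple.sort hHt.eigenvalues
      (Fin.rev (⟨n - 1, by omega⟩ : Fin n)))) ≤ εG := by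
    rw [hrev1]
    calc Real.sqrt lam0 ≤ Real.sqrt (εG ^ 2) := Real.sqrt_le_sqrt hlam0_le
      _ = εG := Real.sqrt_sq hε0
  -- Part 2 : largest singular value of Gt is ≥ C1low - εG
  set i1 : Fin n := Tuple.sort hHG.eigenvalues (Fin.rev ⟨0, hn⟩) with hi1def
  set v : Fin n → ℝ := (hHG.eigenvectorBasis i1 : Fin n → ℝ) with hvdef
  have hvv : v ⬝ᵥ v = 1 := by
    have h1 : (inner ℝ (hHG.eigenvectorBasis i1) (hHG.eigenvectorBasis i1) : ℝ) = 1 := by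
      rw [real_inner_self_eq_norm_sq, hHG.eigenvectorBasis.orthonormal.1 i1]; norm_num
    rw [← h1, inner_eq_dot]
  have hGv : (G *ᵥ v) ⬝ᵥ (G *ᵥ v) = hHG.eigenvalues i1 := by
    rw [← dot_transpose_mul]
    have h2 : (Gᵀ * G) *ᵥ v = hHG.eigenvalues i1 • v := hHG.mulVec_eigenvectorBasis i1
    rw [h2, dotProduct_smul, smul_eq_mul, hvv, mul_one]
  have hsqrtGv : C1low ≤ Real.sqrt ((G *ᵥ v) ⬝ᵥ (G *ᵥ v)) := by rw [hGv]; exact hC1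
  have herr : Real.sqrt (((G - Gt) *ᵥ v) ⬝ᵥ ((G - Gt) *ᵥ v)) ≤ εG := by
    have h3 : ((G - Gt) *ᵥ v) ⬝ᵥ ((G - Gt) *ᵥ v) ≤ εG ^ 2 := by
      calc ((G - Gt) *ᵥ v) ⬝ᵥ ((G - Gt) *ᵥ v)
          ≤ (∑ j, ∑ i, ((G - Gt) j i) ^ 2) * (v ⬝ᵥ v) := mulVec_dot_le _ _
        _ = ∑ j, ∑ i, ((G - Gt) j i) ^ 2 := by rw [hvv, mul_one]
        _ ≤ εG ^ 2 := hfrob_sq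
    calc Real.sqrt (((G - Gt) *ᵥ v) ⬝ᵥ ((G - Gt) *ᵥ v)) ≤ Real.sqrt (εG ^ 2) :=
        Real.sqrt_le_sqrt h3
      _ = εG := Real.sqrt_sq hε0
  have htri := sqrt_dot_triangle (G *ᵥ v) (Gt *ᵥ v)
  have hsub : G *ᵥ v - Gt *ᵥ v = (G - Gt) *ᵥ v := (Matrix.sub_mulVec _ _ _).symm
  rw [hsub] at htri
  have hGtv : C1low - εG ≤ Real.sqrt ((Gt *ᵥ v) ⬝ᵥ (Gt *ᵥ v)) := by linarith
  set lamtop := hHt.eigenvalues (Tuple.sort hHt.eigenvalues ⟨n - 1, by omega⟩) with hlamtopdef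
  have hup : (Gt *ᵥ v) ⬝ᵥ (Gt *ᵥ v) ≤ lamtop := by
    have h4 := rayleigh_upper hHt v (le_sort_last hn hHt.eigenvalues)
    have h5 : v ⬝ᵥ (Gtᴴ * Gt) *ᵥ v = (Gt *ᵥ v) ⬝ᵥ (Gt *ᵥ v) := by
      rw [Matrix.conjTranspose_eq_transpose_of_trivial, dot_transpose_mul]
    rw [h5, hvv, mul_one] at h4
    rw [hlamtopdef]; exact h4
  have hrev2 : Fin.rev (⟨0, hn⟩ : Fin n) = (⟨n - 1, by omega⟩ : Fin n) := by
    ext; simp [Fin.rev]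
  have hσ1 : C1low - εG ≤ Real.sqrt (hHt.eigenvalues (Tuple.sort hHt.eigenvalues
      (Fin.rev (⟨0, hn⟩ : Fin n)))) := by
    rw [hrev2]
    calc C1low - εG ≤ Real.sqrt ((Gt *ᵥ v) ⬝ᵥ (Gt *ᵥ v)) := hGtv
      _ ≤ Real.sqrt lamtop := Real.sqrt_le_sqrt hup
  exact div_le_div₀ hε0 hσn (by linarith) hσ1

end NRFRanCoAux


/-- **Non-uniqueness bound of NR-FRanCo.** If the feature functions `u_1, …, u_n : D → ℝ`
are linearly dependent over `ℝ`, `G` is their sample matrix at points `p_1, …, p_m ∈ D`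
(`m > n`), `‖G − G̃‖_F ≤ ε_G`, and `C₁ˡᵒʷ ≤ σ_1(G)` with `C₁ˡᵒʷ > ε_G`, then
`ρ(G̃) ≤ ε_G / (C₁ˡᵒʷ − ε_G)`. -/
theorem rho_upper_bound_of_linearly_dependent_features {D : Type*} (m n : ℕ)
    (hmn : n < m) (hn : 0 < n) (u : Fin n → D → ℝ)
    (hdep : ∃ c : Fin n → ℝ, (∃ i, c i ≠ 0) ∧ ∀ x : D, ∑ i, c i * u i x = 0)
    (p : Fin m → D) (G Gt : Matrix (Fin m) (Fin n) ℝ)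
    (hG : ∀ (j : Fin m) (i : Fin n), G j i = u i (p j))
    (εG C1low : ℝ)
    (hE : frobNorm (G - Gt) ≤ εG)
    (hC1 : C1low ≤ singularValue G ⟨0, hn⟩)
    (hgap : εG < C1low) :
    rho hn Gt ≤ εG / (C1low - εG) := by
  exact aux_main m n hmn hn u hdep p G Gt hG εG C1low hE hC1 hgap
end
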